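/- arXiv:2306.12984 — 4 statements merged into one kernel-verified Lean document; each statement's English description precedes it below -/
import Mathlib

section
/- The set Π(X) of partitions of N corresponding to patterns of mutual independence of X is closed under the meet operation of the partition lattice: if π_1, π_2 ∈ Π(X), then π_1 ∧ π_2 ∈ Π(X). -/
open MeasureTheory ProbabilityTheory

/-- The partition associated with a setoid `π` on `N` is a pattern of mutual independence
for the family `X` if the σ-algebras generated by the subfamilies of `X` over the
blocks (equivalence classes) of `π` are mutually independent under `P`. -/
def IsIndepPattern {Ω N : Type*} [MeasurableSpace Ω] (P : Measure Ω)
    {E : N → Type*} (mE : ∀ i, MeasurableSpace (E i)) (X : ∀ i, Ω → E i)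
    (π : Setoid N) : Prop :=
  iIndep (fun c : Quotient π =>
    ⨆ i ∈ {j : N | Quotient.mk π j = c}, (mE i).comap (X i)) P

/-- Helper: independence transfers along an injective-on-a-finset reindexing into
sub-σ-algebras. -/
lemma meas_biInter_of_injOn {Ω I J : Type*} [MeasurableSpace Ω] {P : Measure Ω}
    {M : J → MeasurableSpace Ω} (hM : iIndep M P)
    (u : Finset I) (g : I → J) (hg : Set.InjOn g u)
    (f : I → Set Ω) (hf : ∀ i ∈ u, MeasurableSet[M (g i)] (f i)) :
    P (⋂ i ∈ u, f i) = ∏ i ∈ u, P (f i) := by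
  classical
  set F : J → Set Ω := fun j => ⋂ i ∈ u.filter (fun i => g i = j), f i with hF
  have hfil : ∀ i ∈ u, u.filter (fun i' => g i' = g i) = {i} := by
    intro i hi
    ext i'
    simp only [Finset.mem_filter, Finset.mem_singleton]
    constructor
    · rintro ⟨hi', he⟩; exact hg hi' hi he
    · rintro rfl; exact ⟨hi, rfl⟩
  have hFg : ∀ i ∈ u, F (g i) = f i := by
    intro i hi
    show (⋂ i' ∈ u.filter (fun i' => g i' = g i), f i') = f i
    rw [hfil i hi]
    simp
  have hinter : (⋂ j ∈ u.image g, F j) = ⋂ i ∈ u, f i := by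
    refine Set.Subset.antisymm (Set.subset_iInter₂ fun i hi => ?_)
      (Set.subset_iInter₂ fun j hj => ?_)
    · exact (hFg i hi) ▸ Set.biInter_subset_of_mem (Finset.mem_image_of_mem g hi)
    · obtain ⟨i, hi, rfl⟩ := Finset.mem_image.1 hj
      exact (hFg i hi) ▸ Set.biInter_subset_of_mem hi
  have hmeas : ∀ j ∈ u.image g, MeasurableSet[M j] (F j) := by
    intro j hj
    rw [Finset.mem_image] at hj
    obtain ⟨i, hi, rfl⟩ := hj
    rw [hFg i hi]
    exact hf i hi
  have := hM.meas_biInter hmeas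
  rw [hinter] at this
  rw [this, Finset.prod_image (fun a ha b hb h => hg ha hb h)]
  exact Finset.prod_congr rfl fun i hi => by rw [hFg i hi]

/-- `Π(X)`, the set of partitions of `N` that are patterns of mutual independence of `X`,
is closed under the meet (blockwise intersection) of the partition lattice. -/
theorem indepPattern_inf_closed
    {Ω N : Type*} [MeasurableSpace Ω] (P : Measure Ω) [IsProbabilityMeasure P]
    {E : N → Type*} (mE : ∀ i, MeasurableSpace (E i)) (X : ∀ i, Ω → E i)
    (hX : ∀ i, Measurable (X i)) [Finite N]
    (π₁ π₂ : Setoid N)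
    (h₁ : IsIndepPattern P mE X π₁) (h₂ : IsIndepPattern P mE X π₂) :
    IsIndepPattern P mE X (π₁ ⊓ π₂) := by
  classical
  set m : Quotient (π₁ ⊓ π₂) → MeasurableSpace Ω := fun c =>
    ⨆ i ∈ {j : N | Quotient.mk (π₁ ⊓ π₂) j = c}, (mE i).comap (X i) with hm
  set M₁ : Quotient π₁ → MeasurableSpace Ω := fun c =>
    ⨆ i ∈ {j : N | Quotient.mk π₁ j = c}, (mE i).comap (X i) with hM₁
  set M₂ : Quotient π₂ → MeasurableSpace Ω := fun c =>
    ⨆ i ∈ {j : N | Quotient.mk π₂ j = c}, (mE i).comap (X i) with hM₂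
  -- projections to the coarser quotients
  set f₁ : Quotient (π₁ ⊓ π₂) → Quotient π₁ :=
    Quotient.lift (Quotient.mk π₁) (fun a b h => Quotient.sound h.1) with hf₁
  set f₂ : Quotient (π₁ ⊓ π₂) → Quotient π₂ :=
    Quotient.lift (Quotient.mk π₂) (fun a b h => Quotient.sound h.2) with hf₂
  have hf₁mk : ∀ j : N, f₁ (Quotient.mk (π₁ ⊓ π₂) j) = Quotient.mk π₁ j := fun j => rfl
  have hf₂mk : ∀ j : N, f₂ (Quotient.mk (π₁ ⊓ π₂) j) = Quotient.mk π₂ j := fun j => rfl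
  have hle₁ : ∀ c, m c ≤ M₁ (f₁ c) := by
    intro c
    refine iSup₂_le fun i hi => ?_
    refine le_iSup₂_of_le i ?_ le_rfl
    rw [Set.mem_setOf_eq] at hi ⊢
    rw [← hi]
    exact (hf₁mk i).symm
  have hle₂ : ∀ c, m c ≤ M₂ (f₂ c) := by
    intro c
    refine iSup₂_le fun i hi => ?_
    refine le_iSup₂_of_le i ?_ le_rfl
    rw [Set.mem_setOf_eq] at hi ⊢
    rw [← hi]
    exact (hf₂mk i).symm
  -- key injectivity: (f₁, f₂) is injective
  have hinj : ∀ c c' : Quotient (π₁ ⊓ π₂), f₁ c = f₁ c' → f₂ c = f₂ c' → c = c' := by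
    intro c c'
    refine Quotient.inductionOn₂ c c' fun a b h1 h2 => ?_
    exact Quotient.sound ⟨Quotient.exact h1, Quotient.exact h2⟩
  rw [IsIndepPattern, iIndep_iff]
  intro s f hf
  -- group s by f₁
  have hgroup : (⋂ c ∈ s, f c) = ⋂ b ∈ s.image f₁, ⋂ c ∈ s.filter (fun c => f₁ c = b), f c := by
    ext x
    simp only [Set.mem_iInter, Finset.mem_image, Finset.mem_filter]
    constructor
    · rintro h b ⟨c, hc, rfl⟩ c' ⟨hc', _⟩; exact h c' hc'
    · intro h c hc; exact h (f₁ c) ⟨c, hc, rfl⟩ c ⟨hc, rfl⟩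
  -- inner computation via h₂
  have hinner : ∀ b ∈ s.image f₁,
      P (⋂ c ∈ s.filter (fun c => f₁ c = b), f c)
        = ∏ c ∈ s.filter (fun c => f₁ c = b), P (f c) := by
    intro b _
    refine meas_biInter_of_injOn h₂ _ f₂ ?_ f ?_
    · intro c hc c' hc' he
      rw [Finset.coe_filter, Set.mem_setOf_eq] at hc hc'
      exact hinj c c' (hc.2.trans hc'.2.symm) he
    · intro c hc
      rw [Finset.mem_filter] at hc
      exact hle₂ c _ (hf c hc.1)
  -- outer computation via h₁
  have houter : P (⋂ b ∈ s.image f₁, ⋂ c ∈ s.filter (fun c => f₁ c = b), f c)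
      = ∏ b ∈ s.image f₁, P (⋂ c ∈ s.filter (fun c => f₁ c = b), f c) := by
    refine h₁.meas_biInter fun b hb => ?_
    refine Finset.measurableSet_biInter _ fun c hc => ?_
    rw [Finset.mem_filter] at hc
    have := hle₁ c _ (hf c hc.1)
    rw [hc.2] at this
    exact this
  calc P (⋂ c ∈ s, f c)
      = P (⋂ b ∈ s.image f₁, ⋂ c ∈ s.filter (fun c => f₁ c = b), f c) := by rw [hgroup]
    _ = ∏ b ∈ s.image f₁, P (⋂ c ∈ s.filter (fun c => f₁ c = b), f c) := houter
    _ = ∏ b ∈ s.image f₁, ∏ c ∈ s.filter (fun c => f₁ c = b), P (f c) :=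
        Finset.prod_congr rfl hinner
    _ = ∏ c ∈ s, P (f c) := Finset.prod_fiberwise_of_maps_to (fun c hc => Finset.mem_image_of_mem f₁ hc) _
end

section
/- The set Π(X) of partitions corresponding to patterns of mutual independence of X has a unique finest element μ(X), given by the meet of all elements of Π(X), and μ(X) itself belongs to Π(X). -/
/-! Patterns of independence are closed under meets. A block of `π ⊓ σ` is determined by the
`π`-block and the `σ`-block containing it. Grouping the blocks of `π ⊓ σ` by their `π`-block,
independence of the `π`-blocks factors a joint probability over the groups, and inside one group
the blocks lie in distinct `σ`-blocks, so independence of the `σ`-blocks factors it further.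
As `⊤` is a pattern and `N` has only finitely many partitions, the meet of all patterns is a
finite meet, hence again a pattern. -/

open MeasureTheory ProbabilityTheory

namespace ProbabilityTheory

variable {Ω ι κ : Type*} [MeasurableSpace Ω] {P : Measure Ω}

lemma iIndep.of_iIndep_fibers {m : ι → MeasurableSpace Ω}
    {n : κ → MeasurableSpace Ω} (g : ι → κ) (hn : iIndep n P) (hmn : ∀ i, m i ≤ n (g i))
    (hfib : ∀ k, iIndep (fun i : {i // g i = k} => m i) P) : iIndep m P := by
  classical
  rw [iIndep_iff]
  intro S f hf
  set F : κ → Set Ω := fun k => ⋂ i ∈ S.filter (g · = k), f i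
  have hF : ∀ k ∈ S.image g, MeasurableSet[n k] (F k) := fun k _ =>
    Finset.measurableSet_biInter _ fun i hi => by
      obtain ⟨hiS, rfl⟩ := Finset.mem_filter.1 hi
      exact hmn i _ (hf i hiS)
  have hFprod : ∀ k, P (F k) = ∏ i ∈ S.filter (g · = k), P (f i) := by
    intro k
    have := (hfib k).meas_biInter (S := S.subtype (g · = k)) (s := fun i => f i)
      fun i hi => hf i (Finset.mem_subtype.1 hi)
    have hsub : ⋂ i ∈ S.subtype (g · = k), f i = F k := by
      ext ω
      simp [F, imp.swap]
    rwa [Finset.prod_subtype_eq_prod_filter (fun i => P (f i)), hsub] at this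
  have hInter : ⋂ i ∈ S, f i = ⋂ k ∈ S.image g, F k := by
    ext ω
    simp only [F, Set.mem_iInter, Finset.mem_image, Finset.mem_filter]
    exact ⟨fun h _ _ i hi => h i hi.1, fun h i hi => h (g i) ⟨i, hi, rfl⟩ i ⟨hi, rfl⟩⟩
  calc P (⋂ i ∈ S, f i) = ∏ k ∈ S.image g, P (F k) := by rw [hInter, hn.meas_biInter hF]
    _ = ∏ i ∈ S, P (f i) := by
      simp_rw [hFprod]
      exact Finset.prod_fiberwise_of_maps_to (fun i hi => Finset.mem_image_of_mem g hi) _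

lemma iIndep.of_le_of_le {κ' : Type*} {m : ι → MeasurableSpace Ω}
    {n₁ : κ → MeasurableSpace Ω} {n₂ : κ' → MeasurableSpace Ω} {g₁ : ι → κ} {g₂ : ι → κ'}
    (h₁ : iIndep n₁ P) (h₂ : iIndep n₂ P) (hm₁ : ∀ i, m i ≤ n₁ (g₁ i))
    (hm₂ : ∀ i, m i ≤ n₂ (g₂ i)) (hg : Function.Injective fun i => (g₁ i, g₂ i)) :
    iIndep m P :=
  h₁.of_iIndep_fibers g₁ hm₁ fun k =>
    iIndep_of_iIndep_of_le
      (h₂.precomp (g := fun i : {i // g₁ i = k} => g₂ i) fun i j hij =>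
        Subtype.ext (hg (Prod.ext (i.2.trans j.2.symm) hij)))
      fun i => hm₂ i

end ProbabilityTheory

instance Setoid.instFinite {α : Type*} [Finite α] : Finite (Setoid α) :=
  Finite.of_injective _ fun _ _ => Setoid.classes_inj.2

lemma Setoid.map_of_le_inf_prod_injective {α : Type*} (r s : Setoid α) :
    Function.Injective fun c : Quotient (r ⊓ s) =>
      (Setoid.map_of_le inf_le_left c, Setoid.map_of_le inf_le_right c) :=
  Quotient.ind₂ fun _ _ h => Quotient.sound
    ⟨Quotient.exact (Prod.ext_iff.1 h).1, Quotient.exact (Prod.ext_iff.1 h).2⟩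

lemma Setoid.iSup_mk_eq_le_of_le {α β : Type*} [CompleteLattice β] {r s : Setoid α}
    (h : r ≤ s) (m : α → β) (c : Quotient r) :
    ⨆ i ∈ {j | Quotient.mk r j = c}, m i ≤
      ⨆ i ∈ {j | Quotient.mk s j = Setoid.map_of_le h c}, m i :=
  iSup₂_le fun i (hi : Quotient.mk r i = c) =>
    le_iSup₂_of_le (f := fun i (_ : i ∈ {j | Quotient.mk s j = _}) => m i) i (hi ▸ rfl) le_rfl

section IndepPattern

variable {Ω N : Type*} [MeasurableSpace Ω] {P : Measure Ω}
  {E : N → Type*} {mE : ∀ i, MeasurableSpace (E i)} {X : ∀ i, Ω → E i}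

lemma isIndepPattern_top [IsProbabilityMeasure P] : IsIndepPattern P mE X ⊤ :=
  have : Subsingleton (Quotient (⊤ : Setoid N)) :=
    ⟨Quotient.ind₂ fun _ _ => Quotient.sound trivial⟩
  iIndep.of_subsingleton

lemma IsIndepPattern.inf {π σ : Setoid N} (hπ : IsIndepPattern P mE X π)
    (hσ : IsIndepPattern P mE X σ) : IsIndepPattern P mE X (π ⊓ σ) :=
  hπ.of_le_of_le hσ (Setoid.iSup_mk_eq_le_of_le inf_le_left _)
    (Setoid.iSup_mk_eq_le_of_le inf_le_right _) (Setoid.map_of_le_inf_prod_injective π σ)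

end IndepPattern

theorem finest_indepPattern_general
    {Ω N : Type*} [MeasurableSpace Ω] (P : Measure Ω) [IsProbabilityMeasure P]
    [Finite N]
    {E : N → Type*} (mE : ∀ i, MeasurableSpace (E i)) (X : ∀ i, Ω → E i) :
    IsIndepPattern P mE X (sInf {π : Setoid N | IsIndepPattern P mE X π}) ∧
      ∀ π : Setoid N, IsIndepPattern P mE X π →
        sInf {π : Setoid N | IsIndepPattern P mE X π} ≤ π := by
  have hclosed : InfClosed {π : Setoid N | IsIndepPattern P mE X π} :=
    fun _ hπ _ hσ => hπ.inf hσ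
  exact ⟨hclosed.sInf_mem (Set.toFinite _) isIndepPattern_top subset_rfl, fun _ hπ => sInf_le hπ⟩

/-- **Theorem 1 (finest pattern).** For a finite nonempty index set `N`, the set `Π(X)` of
patterns of mutual independence of `X` has a unique finest element `μ(X)`, namely the meet
of all elements of `Π(X)`: this meet itself belongs to `Π(X)` and is finer than (≤) every
element of `Π(X)`. -/
theorem finest_indepPattern
    {Ω N : Type*} [MeasurableSpace Ω] (P : Measure Ω) [IsProbabilityMeasure P]
    [Finite N] [Nonempty N]
    {E : N → Type*} (mE : ∀ i, MeasurableSpace (E i)) (X : ∀ i, Ω → E i)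
    (hX : ∀ i, Measurable (X i)) :
    IsIndepPattern P mE X (sInf {π : Setoid N | IsIndepPattern P mE X π}) ∧
      ∀ π : Setoid N, IsIndepPattern P mE X π →
        sInf {π : Setoid N | IsIndepPattern P mE X π} ≤ π :=
  finest_indepPattern_general P mE X
end

section
/- Let μ(X) = a_1 | ... | a_k be the finest pattern of mutual independence of X. Then the set Δ(X) of two-block partitions (bipartitions) of N belonging to Π(X) equals exactly the set of bipartitions obtained by merging the blocks a_1, ..., a_k into two nonempty groups, i.e., Δ(X) = { (∪_{j ∈ b_1} a_j) | (∪_{j ∈ b_2} a_j) : {b_1, b_2} a bipartition of {1,...,k} }. -/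
open MeasureTheory ProbabilityTheory

/-- A family of σ-algebras indexed by a type with exactly two elements is mutually
independent as soon as the two σ-algebras are independent. -/
lemma iIndep_of_indep_pair {Ω ι : Type*} {mΩ : MeasurableSpace Ω} {μ : Measure Ω}
    [IsProbabilityMeasure μ] {m : ι → MeasurableSpace Ω} (c₁ c₂ : ι) (hne : c₁ ≠ c₂)
    (hcover : ∀ c : ι, c = c₁ ∨ c = c₂) (h : Indep (m c₁) (m c₂) μ) : iIndep m μ := by
  classical
  rw [iIndep_iff]
  intro s f hf
  have hsub : s ⊆ ({c₁, c₂} : Finset ι) := by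
    intro x hx
    rcases hcover x with rfl | rfl <;> simp
  by_cases h1 : c₁ ∈ s <;> by_cases h2 : c₂ ∈ s
  · have hs : s = {c₁, c₂} := by
      apply Finset.Subset.antisymm hsub
      intro x hx
      simp only [Finset.mem_insert, Finset.mem_singleton] at hx
      rcases hx with rfl | rfl <;> assumption
    subst hs
    rw [Finset.set_biInter_insert, Finset.set_biInter_singleton,
      Finset.prod_insert (by simpa using hne), Finset.prod_singleton]
    exact (Indep_iff _ _ _).1 h _ _ (hf c₁ h1) (hf c₂ h2)
  · have hs : s = {c₁} := by
      apply Finset.Subset.antisymm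
      · intro x hx
        rcases hcover x with rfl | rfl
        · simp
        · exact absurd hx h2
      · intro x hx
        simp only [Finset.mem_singleton] at hx
        subst hx; assumption
    subst hs; simp
  · have hs : s = {c₂} := by
      apply Finset.Subset.antisymm
      · intro x hx
        rcases hcover x with rfl | rfl
        · exact absurd hx h1
        · simp
      · intro x hx
        simp only [Finset.mem_singleton] at hx
        subst hx; assumption
    subst hs; simp
  · have hs : s = ∅ := by
      apply Finset.eq_empty_of_forall_notMem
      intro x hx
      rcases hcover x with rfl | rfl
      · exact h1 hx
      · exact h2 hx
    subst hs; simp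

/-- **Proposition 2.** Let `μ₀` be the finest pattern of mutual independence of `X`
(it is a pattern, and it is finer than every pattern). Then the set `Δ(X)` of two-block
partitions (bipartitions) of `N` that are patterns of mutual independence is exactly the
set of bipartitions obtained by merging the blocks of `μ₀` into two nonempty groups, i.e.,
the set of bipartitions coarser than `μ₀`. -/
theorem dichotomic_patterns_eq_coarsenings_of_finest
    {Ω N : Type*} [MeasurableSpace Ω] (P : Measure Ω) [IsProbabilityMeasure P]
    [Finite N]
    {E : N → Type*} (mE : ∀ i, MeasurableSpace (E i)) (X : ∀ i, Ω → E i)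
    (hX : ∀ i, Measurable (X i))
    (μ₀ : Setoid N) (hμ₀ : IsIndepPattern P mE X μ₀)
    (hfinest : ∀ π : Setoid N, IsIndepPattern P mE X π → μ₀ ≤ π) :
    {δ : Setoid N | IsIndepPattern P mE X δ ∧ Nat.card (Quotient δ) = 2} =
      {δ : Setoid N | μ₀ ≤ δ ∧ Nat.card (Quotient δ) = 2} := by
  ext δ
  simp only [Set.mem_setOf_eq]
  constructor
  · rintro ⟨h1, h2⟩
    exact ⟨hfinest δ h1, h2⟩
  · rintro ⟨hle, hcard⟩
    refine ⟨?_, hcard⟩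
    -- the canonical map from `Quotient μ₀` to `Quotient δ`
    set q : Quotient μ₀ → Quotient δ :=
      fun d => Quotient.liftOn d (Quotient.mk δ) (fun a b hab => Quotient.sound (hle hab))
      with hq
    have hqmk : ∀ i : N, q (Quotient.mk μ₀ i) = Quotient.mk δ i := fun i => rfl
    -- the σ-algebras over the blocks of μ₀
    set m : Quotient μ₀ → MeasurableSpace Ω :=
      fun d => ⨆ i ∈ {j : N | Quotient.mk μ₀ j = d}, (mE i).comap (X i) with hm
    have hm_le : ∀ d, m d ≤ ‹MeasurableSpace Ω› := by
      intro d
      refine iSup₂_le fun i _ => ?_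
      exact MeasurableSpace.comap_le_iff_le_map.mpr fun s hs => (hX i) hs
    -- every δ-block σ-algebra is a sup of μ₀-block σ-algebras over the preimage under q
    have hkey : ∀ c : Quotient δ,
        (⨆ i ∈ {j : N | Quotient.mk δ j = c}, (mE i).comap (X i)) = ⨆ d ∈ q ⁻¹' {c}, m d := by
      intro c
      apply le_antisymm
      · refine iSup₂_le fun i hi => ?_
        have hd : q (Quotient.mk μ₀ i) = c := by rw [hqmk]; exact hi
        refine le_trans ?_ (le_iSup₂ (f := fun d _ => m d) (Quotient.mk μ₀ i) hd)
        exact le_iSup₂ (f := fun j (_ : Quotient.mk μ₀ j = Quotient.mk μ₀ i) => (mE j).comap (X j)) i rfl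
      · refine iSup₂_le fun d hd => ?_
        refine iSup₂_le fun i hi => ?_
        have : Quotient.mk δ i = c := by
          rw [← hqmk i, hi]; exact hd
        exact le_iSup₂ (f := fun j (_ : Quotient.mk δ j = c) => (mE j).comap (X j)) i this
    -- get the two blocks of δ
    obtain ⟨c₁, c₂, hne, hcover⟩ := Nat.card_eq_two_iff.mp hcard
    have hcover' : ∀ c : Quotient δ, c = c₁ ∨ c = c₂ := by
      intro c
      have : c ∈ ({c₁, c₂} : Set (Quotient δ)) := hcover ▸ Set.mem_univ c
      simpa using this
    refine iIndep_of_indep_pair c₁ c₂ hne hcover' ?_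
    rw [hkey c₁, hkey c₂]
    exact indep_iSup_of_disjoint hm_le hμ₀
      ((Set.disjoint_singleton.2 hne).preimage q)
end

section
/- Let L be the lattice of partitions of a finite set N (ordered by refinement), let μ be an element of a sublattice Π of L that is the minimum of Π, let Ω_2 be the set of two-block partitions, and let Δ = Π ∩ Ω_2. If |blocks of μ| ≥ 2, then μ equals the meet of all elements of Δ: μ = ⋀_{δ ∈ Δ} δ. -/
/-- **Theorem 2 (lattice-theoretic core).** Let `N` be a finite set with at least two
elements, `Π` an upward-closed (under the refinement order on partitions, modeled as
setoids) set of partitions of `N` with minimum element `μ` having at least two blocks,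
and let `Δ = Π ∩ Ω₂` be the set of two-block partitions in `Π`. Then `μ` is the meet of
all elements of `Δ`. -/
theorem finest_eq_sInf_dichotomic
    {N : Type*} [Finite N]
    (Pi : Set (Setoid N)) (μ : Setoid N)
    (hup : ∀ π ∈ Pi, ∀ π' : Setoid N, π ≤ π' → π' ∈ Pi)
    (hμ_mem : μ ∈ Pi) (hμ_min : ∀ π ∈ Pi, μ ≤ π)
    (hblocks : 2 ≤ Nat.card (Quotient μ)) :
    μ = sInf {δ ∈ Pi | Nat.card (Quotient δ) = 2} := by
  classical
  apply le_antisymm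
  · exact le_sInf fun δ hδ => hμ_min δ hδ.1
  · rw [Setoid.le_def]
    intro a b hab
    by_contra hne
    set f : N → Bool := fun x => decide (μ x a) with hf
    set δ : Setoid N := Setoid.ker f with hδ
    have hle : μ ≤ δ := by
      rw [Setoid.le_def]
      intro x y hxy
      show f x = f y
      simp only [hf, decide_eq_decide]
      exact ⟨fun h => μ.trans (μ.symm hxy) h, fun h => μ.trans hxy h⟩
    have hsurj : Function.Surjective f := by
      intro c
      cases c
      · exact ⟨b, by simp only [hf, decide_eq_false_iff_not]; exact fun h => hne (μ.symm h)⟩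
      · exact ⟨a, by simp only [hf, decide_eq_true_eq]; exact μ.refl a⟩
    have hcard : Nat.card (Quotient δ) = 2 := by
      have e : Quotient δ ≃ Set.range f := Setoid.quotientKerEquivRange f
      rw [Nat.card_congr e]
      rw [Set.range_eq_univ.2 hsurj]
      simp [Nat.card_eq_fintype_card]
    have hmem : δ ∈ {δ ∈ Pi | Nat.card (Quotient δ) = 2} :=
      ⟨hup μ hμ_mem δ hle, hcard⟩
    have : f a = f b := hab δ hmem
    simp only [hf, decide_eq_decide] at this
    exact hne (μ.symm (this.mp (μ.refl a)))
end
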